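/- arXiv:1408.0052 — 6 statements merged into one kernel-verified Lean document; each statement's English description precedes it below -/
import Mathlib

section
/- In the lattice S_QM, the meet is given by: (𝒜₁, P₁) ∧ (𝒜₂, P₂) = (Alg(𝒜₁, 𝒜₂), P₁ ∧ P₂) — where Alg(𝒜₁, 𝒜₂) is the algebra generated by 𝒜₁ and 𝒜₂ and P₁ ∧ P₂ is the meet of projections in L(ℋ) — whenever [𝒜₁, 𝒜₂] = 0 (the two algebras commute elementwise) and P₁ ∧ P₂ ≠ 0, and (𝒜₁, P₁) ∧ (𝒜₂, P₂) = ⊥ otherwise. -/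
open scoped ENNReal

variable (H : Type*) [NormedAddCommGroup H] [InnerProductSpace ℂ H] [CompleteSpace H]

/-- An orthogonal projection on the Hilbert space `H`, i.e. an element of `L(ℋ)`. -/
def IsProj (P : H →L[ℂ] H) : Prop := IsIdempotentElem P ∧ IsSelfAdjoint P

/-- The lattice order on projections: `P ≤ Q` iff `P * Q = P`. -/
def pleq (P Q : H →L[ℂ] H) : Prop := P * Q = P

/-- An abelian (commutative) von Neumann algebra. -/
def IsAbelianAlg (A : VonNeumannAlgebra H) : Prop :=
  ∀ x ∈ A, ∀ y ∈ A, x * y = y * x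
/-- An element of `S_QM`: a pair `(𝒜, P)` of an abelian von Neumann algebra `𝒜` and a
projection `P ∈ 𝒜`.  Pairs with `proj = 0` all represent the bottom element `⊥`. -/
structure SQM where
  alg : VonNeumannAlgebra H
  proj : H →L[ℂ] H
  abelian : IsAbelianAlg H alg
  isProj : IsProj H proj
  mem : proj ∈ alg

/-- The order on `S_QM`: `(𝒜₁,P₁) ≤ (𝒜₂,P₂)` iff `P₁ = 0` or (`𝒜₁ ⊇ 𝒜₂` and `P₁ ≤ P₂`). -/
def SQMle (a b : SQM H) : Prop :=
  a.proj = 0 ∨ (b.alg ≤ a.alg ∧ pleq H a.proj b.proj)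
/-- Two algebras commute elementwise: `[𝒜₁, 𝒜₂] = 0`. -/
def AlgCommute (A B : VonNeumannAlgebra H) : Prop :=
  ∀ x ∈ A, ∀ y ∈ B, x * y = y * x
/-- `R` is the meet `P ⊓ Q` in the lattice `L(ℋ)` of all projections on `H`. -/
def IsProjInf (P Q R : H →L[ℂ] H) : Prop :=
  IsProj H R ∧ pleq H R P ∧ pleq H R Q ∧
    ∀ R', IsProj H R' → pleq H R' P → pleq H R' Q → pleq H R' R
/-- `G` is the von Neumann algebra `Alg(𝒜₁,𝒜₂)` generated by `𝒜₁` and `𝒜₂`. -/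
def IsGenAlg (A B G : VonNeumannAlgebra H) : Prop :=
  A ≤ G ∧ B ≤ G ∧ ∀ G' : VonNeumannAlgebra H, A ≤ G' → B ≤ G' → G ≤ G'

/-- The meet in `S_QM`: if `[𝒜₁,𝒜₂] = 0` and `P₁ ⊓ P₂ ≠ 0` then
`(Alg(𝒜₁,𝒜₂), P₁ ⊓ P₂)` is the greatest lower bound of `(𝒜₁,P₁)` and `(𝒜₂,P₂)`;
otherwise their greatest lower bound is `⊥` (the elements with zero projection). -/
theorem sqm_meet (a b : SQM H) (R : H →L[ℂ] H) (hR : IsProjInf H a.proj b.proj R) :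
    (AlgCommute H a.alg b.alg → R ≠ 0 →
      ∀ G : VonNeumannAlgebra H, IsGenAlg H a.alg b.alg G →
      ∀ m : SQM H, m.alg = G → m.proj = R →
      ∀ x : SQM H, SQMle H x m ↔ (SQMle H x a ∧ SQMle H x b)) ∧
    ((¬ AlgCommute H a.alg b.alg ∨ R = 0) →
      ∀ x : SQM H, (SQMle H x a ∧ SQMle H x b) ↔ x.proj = 0) := by

  obtain ⟨hRproj, hRa, hRb, hRmax⟩ := hR
  constructor
  · rintro _ _ G ⟨hGa, hGb, hGmin⟩ m hmalg hmproj x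
    constructor
    · rintro (h0 | ⟨hGx, hxR⟩)
      · exact ⟨Or.inl h0, Or.inl h0⟩
      · rw [hmalg] at hGx
        rw [hmproj] at hxR
        refine ⟨Or.inr ⟨hGa.trans hGx, ?_⟩, Or.inr ⟨hGb.trans hGx, ?_⟩⟩
        · show x.proj * a.proj = x.proj
          rw [← hxR, mul_assoc, hRa]
        · show x.proj * b.proj = x.proj
          rw [← hxR, mul_assoc, hRb]
    · rintro ⟨(h0 | ⟨hax, hxa⟩), hb⟩
      · exact Or.inl h0
      rcases hb with h0 | ⟨hbx, hxb⟩
      · exact Or.inl h0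
      refine Or.inr ⟨?_, ?_⟩
      · rw [hmalg]; exact hGmin x.alg hax hbx
      · show x.proj * m.proj = x.proj
        rw [hmproj]; exact hRmax x.proj x.isProj hxa hxb
  · intro hcase x
    constructor
    · rintro ⟨(h0 | ⟨hax, hxa⟩), hb⟩
      · exact h0
      rcases hb with h0 | ⟨hbx, hxb⟩
      · exact h0
      rcases hcase with hnc | hR0
      · exact absurd (fun p hp q hq => x.abelian p (hax hp) q (hbx hq)) hnc
      · have h := hRmax x.proj x.isProj hxa hxb
        rw [hR0] at h
        rw [← h, mul_zero]
    · intro h0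
      exact ⟨Or.inl h0, Or.inl h0⟩
end

section
/- For any abelian von Neumann subalgebra 𝒜 of B(ℋ) and any two projections P₁, P₂ ∈ L(𝒜), the join in S_QM of (𝒜, P₁) and (𝒜, P₂) equals (𝒜, P₁ ∨ P₂), where P₁ ∨ P₂ is the join of the projections in L(𝒜). -/
open scoped ENNReal

variable (H : Type*) [NormedAddCommGroup H] [InnerProductSpace ℂ H] [CompleteSpace H]

/-- `R` is the join `P ⊔ Q` in the lattice `L(𝒜)` of projections belonging to `A`. -/
def IsProjSupIn (A : VonNeumannAlgebra H) (P Q R : H →L[ℂ] H) : Prop :=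
  R ∈ A ∧ IsProj H R ∧ pleq H P R ∧ pleq H Q R ∧
    ∀ R', R' ∈ A → IsProj H R' → pleq H P R' → pleq H Q R' → pleq H R R'

/-- For projections `P₁, P₂` in the same abelian algebra `𝒜`, the join in
`S_QM` of `(𝒜,P₁)` and `(𝒜,P₂)` is `(𝒜, P₁ ⊔ P₂)`, where `P₁ ⊔ P₂` is the join in `L(𝒜)`. -/
theorem sqm_join_same_algebra (a b : SQM H) (hab : a.alg = b.alg)
    (R : H →L[ℂ] H) (hR : IsProjSupIn H a.alg a.proj b.proj R)
    (j : SQM H) (hjalg : j.alg = a.alg) (hjproj : j.proj = R) :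
    ∀ x : SQM H, SQMle H j x ↔ (SQMle H a x ∧ SQMle H b x) := by

  obtain ⟨hRmem, hRproj, haR, hbR, hmin⟩ := hR
  intro x
  unfold SQMle pleq at *
  constructor
  · rintro (h0 | ⟨halg, hle⟩)
    · rw [hjproj] at h0
      rw [h0, mul_zero] at haR hbR
      exact ⟨Or.inl haR.symm, Or.inl hbR.symm⟩
    · rw [hjalg] at halg
      rw [hjproj] at hle
      constructor
      · exact Or.inr ⟨halg, by rw [← haR, mul_assoc, hle, haR]⟩
      · exact Or.inr ⟨hab ▸ halg, by rw [← hbR, mul_assoc, hle, hbR]⟩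
  · rintro ⟨ha | ⟨haalg, hale⟩, hb | ⟨hbalg, hble⟩⟩
    · left
      rw [hjproj]
      have h := hmin 0 (zero_mem _) ⟨by simp [IsIdempotentElem], by simp [IsSelfAdjoint]⟩
        (by rw [ha, mul_zero]) (by rw [hb, mul_zero])
      rw [mul_zero] at h
      exact h.symm
    · right
      have halg : x.alg ≤ a.alg := hab ▸ hbalg
      refine ⟨hjalg ▸ halg, ?_⟩
      rw [hjproj]
      exact hmin x.proj (halg x.mem) x.isProj (by rw [ha, zero_mul]) hble
    · right
      refine ⟨hjalg ▸ haalg, ?_⟩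
      rw [hjproj]
      exact hmin x.proj (haalg x.mem) x.isProj hale (by rw [hb, zero_mul])
    · right
      refine ⟨hjalg ▸ haalg, ?_⟩
      rw [hjproj]
      exact hmin x.proj (haalg x.mem) x.isProj hale hble
end

section
/- If 𝒜₁, 𝒜₂, 𝒜₃ are abelian von Neumann subalgebras of B(ℋ) that are pairwise totally incompatible (𝒜ᵢ ∩ 𝒜ⱼ = ℂ·1 for i ≠ j) and pairwise non-commuting ([𝒜ᵢ, 𝒜ⱼ] ≠ 0 for i ≠ j), then (𝒜₃, 1) ∧ ((𝒜₁, 1) ∨ (𝒜₂, 1)) = (𝒜₃, 1) ≠ ⊥ = ((𝒜₃, 1) ∧ (𝒜₁, 1)) ∨ ((𝒜₃, 1) ∧ (𝒜₂, 1)); in particular, the lattice S_QM is not distributive. -/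
open scoped ENNReal

variable (H : Type*) [NormedAddCommGroup H] [InnerProductSpace ℂ H] [CompleteSpace H]

/-- For pairwise totally incompatible, pairwise non-commuting abelian
algebras `𝒜₁, 𝒜₂, 𝒜₃`: `(𝒜₃,1) ⊓ ((𝒜₁,1) ⊔ (𝒜₂,1)) = (𝒜₃,1) ≠ ⊥`, whereas
`(𝒜₃,1) ⊓ (𝒜₁,1) = ⊥ = (𝒜₃,1) ⊓ (𝒜₂,1)` (so the right-hand side of the distributive law
is `⊥`); in particular `S_QM` is not distributive. -/
theorem sqm_not_distributive (a₁ a₂ a₃ : SQM H)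
    (h1 : a₁.proj = 1) (h2 : a₂.proj = 1) (h3 : a₃.proj = 1)
    (hint12 : ∀ x : H →L[ℂ] H, x ∈ a₁.alg → x ∈ a₂.alg → ∃ c : ℂ, x = c • (1 : H →L[ℂ] H))
    (hint13 : ∀ x : H →L[ℂ] H, x ∈ a₁.alg → x ∈ a₃.alg → ∃ c : ℂ, x = c • (1 : H →L[ℂ] H))
    (hint23 : ∀ x : H →L[ℂ] H, x ∈ a₂.alg → x ∈ a₃.alg → ∃ c : ℂ, x = c • (1 : H →L[ℂ] H))
    (hnc12 : ¬ AlgCommute H a₁.alg a₂.alg)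
    (hnc13 : ¬ AlgCommute H a₁.alg a₃.alg)
    (hnc23 : ¬ AlgCommute H a₂.alg a₃.alg) :
    ∀ j : SQM H, (∀ x : SQM H, SQMle H j x ↔ (SQMle H a₁ x ∧ SQMle H a₂ x)) →
      (SQMle H a₃ j ∧ a₃.proj ≠ 0 ∧
        (∀ x : SQM H, (SQMle H x a₃ ∧ SQMle H x a₁) ↔ x.proj = 0) ∧
        (∀ x : SQM H, (SQMle H x a₃ ∧ SQMle H x a₂) ↔ x.proj = 0)) := by
  have hone : (1 : H →L[ℂ] H) ≠ 0 := by
    intro h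
    exact hnc12 (fun x _ y _ => by
      haveI := subsingleton_of_zero_eq_one h.symm
      exact Subsingleton.elim _ _)
  intro j hj
  have hjj : SQMle H j j := Or.inr ⟨le_refl _, j.isProj.1⟩
  obtain ⟨hj1, hj2⟩ := (hj j).mp hjj
  have hj1' := hj1.resolve_left (h1 ▸ hone)
  have hj2' := hj2.resolve_left (h2 ▸ hone)
  have hjproj : j.proj = 1 := by
    have := hj1'.2
    rw [pleq, h1, one_mul] at this
    exact this
  refine ⟨?_, by rw [h3]; exact hone, ?_, ?_⟩
  · refine Or.inr ⟨?_, ?_⟩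
    · intro x hx
      obtain ⟨c, rfl⟩ := hint12 x (hj1'.1 hx) (hj2'.1 hx)
      exact a₃.alg.toStarSubalgebra.smul_mem (one_mem _) c
    · rw [pleq, h3, hjproj, one_mul]
  · intro x
    refine ⟨?_, fun h => ⟨Or.inl h, Or.inl h⟩⟩
    rintro ⟨hx3, hx1⟩
    by_contra hne
    rcases hx3 with h | hx3; · exact hne h
    rcases hx1 with h | hx1; · exact hne h
    exact hnc13 (fun u hu v hv => x.abelian u (hx1.1 hu) v (hx3.1 hv))
  · intro x
    refine ⟨?_, fun h => ⟨Or.inl h, Or.inl h⟩⟩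
    rintro ⟨hx3, hx2⟩
    by_contra hne
    rcases hx3 with h | hx3; · exact hne h
    rcases hx2 with h | hx2; · exact hne h
    exact hnc23 (fun u hu v hv => x.abelian u (hx2.1 hu) v (hx3.1 hv))
end

section
/- The set L_QM of all functions S : 𝔄 → L(ℋ) such that S(𝒜) ∈ L(𝒜) for every 𝒜 ∈ 𝔄 and S(𝒜₁) ≤ S(𝒜₂) whenever 𝒜₁ ⊆ 𝒜₂, equipped with the pointwise partial order S₁ ≤ S₂ iff S₁(𝒜) ≤ S₂(𝒜) for all 𝒜 ∈ 𝔄, is a complete distributive lattice, with binary meet and join computed pointwise: (S₁ ∨ S₂)(𝒜) = S₁(𝒜) ∨ S₂(𝒜) and (S₁ ∧ S₂)(𝒜) = S₁(𝒜) ∧ S₂(𝒜). -/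
open scoped ENNReal

variable (H : Type*) [NormedAddCommGroup H] [InnerProductSpace ℂ H] [CompleteSpace H]

/-- `R` is the meet `P ⊓ Q` in the lattice `L(𝒜)` of projections belonging to `A`. -/
def IsProjInfIn (A : VonNeumannAlgebra H) (P Q R : H →L[ℂ] H) : Prop :=
  R ∈ A ∧ IsProj H R ∧ pleq H R P ∧ pleq H R Q ∧
    ∀ R', R' ∈ A → IsProj H R' → pleq H R' P → pleq H R' Q → pleq H R' R
/-- The collection `𝔄` of abelian von Neumann subalgebras of `B(H)`. -/
def AbAlg := {A : VonNeumannAlgebra H // IsAbelianAlg H A}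
/-- The lattice `L_QM`: monotone functions `S : 𝔄 → L(ℋ)` with `S(𝒜) ∈ L(𝒜)`. -/
structure LQM where
  S : AbAlg H → (H →L[ℂ] H)
  isProj : ∀ A : AbAlg H, IsProj H (S A)
  mem : ∀ A : AbAlg H, S A ∈ A.1
  mono : ∀ A B : AbAlg H, A.1 ≤ B.1 → pleq H (S A) (S B)

/-- `L_QM` carries the pointwise partial order. -/
instance : PartialOrder (LQM H) where
  le S₁ S₂ := ∀ A : AbAlg H, pleq H (S₁.S A) (S₂.S A)
  le_refl S A := (S.isProj A).1
  le_trans S₁ S₂ S₃ h12 h23 A := by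
    show S₁.S A * S₃.S A = S₁.S A
    calc S₁.S A * S₃.S A = S₁.S A * S₂.S A * S₃.S A := by rw [h12 A]
      _ = S₁.S A * (S₂.S A * S₃.S A) := mul_assoc _ _ _
      _ = S₁.S A := by rw [h23 A, h12 A]
  le_antisymm S₁ S₂ h12 h21 := by
    have hS : S₁.S = S₂.S := funext fun A => by
      have hc : S₁.S A * S₂.S A = S₂.S A * S₁.S A :=
        A.2 _ (S₁.mem A) _ (S₂.mem A)
      calc S₁.S A = S₁.S A * S₂.S A := (h12 A).symm
        _ = S₂.S A * S₁.S A := hc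
        _ = S₂.S A := h21 A
    cases S₁; cases S₂; cases hS; rfl

theorem LQM.le_def (S₁ S₂ : LQM H) :
    S₁ ≤ S₂ ↔ ∀ A : AbAlg H, pleq H (S₁.S A) (S₂.S A) := Iff.rfl

/-!
Projections in an abelian von Neumann algebra `𝒜` commute, so in `L(𝒜)` the join and meet of
`P` and `Q` are `P + Q - PQ` and `PQ`, and distributivity is the ring identity
`P(Q + R - QR) = PQ + PR - PQ·PR`. Arbitrary suprema are also pointwise: the projection onto
the closed span of the ranges of a family in `L(𝒜)` lies in `𝒜` (its range is invariant under the
commutant `𝒜'`) and is the supremum of the family in all of `L(ℋ)`, so the pointwise supremum is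
again monotone in `𝒜`. Infima are suprema of lower bounds.
-/

variable {H}

section NonUnitalRing

variable {R : Type*} [NonUnitalRing R] {p q r : R}

theorem IsIdempotentElem.mul_add_sub_mul_left (hp : IsIdempotentElem p) (q : R) :
    p * (p + q - p * q) = p := by
  rw [mul_sub, mul_add, hp.eq, ← mul_assoc, hp.eq]; abel

theorem IsIdempotentElem.mul_add_sub_mul_right (hq : IsIdempotentElem q) (hpq : Commute p q) :
    q * (p + q - p * q) = q := by
  rw [mul_sub, mul_add, hq.eq, ← mul_assoc, ← hpq.eq, mul_assoc, hq.eq]; abel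

theorem add_sub_mul_mul_of_mul_eq (hp : p * r = p) (hq : q * r = q) :
    (p + q - p * q) * r = p + q - p * q := by
  rw [sub_mul, add_mul, hp, hq, mul_assoc, hq]

theorem IsIdempotentElem.mul_add_sub_mul_distrib (hp : IsIdempotentElem p) (hpq : Commute p q)
    (r : R) : p * (q + r - q * r) = p * q + p * r - p * q * (p * r) := by
  rw [mul_assoc, ← mul_assoc q p r, ← hpq.eq, mul_assoc, ← mul_assoc, hp.eq, mul_sub, mul_add]

end NonUnitalRing

namespace IsStarProjection

variable {R : Type*} [NonUnitalCStarAlgebra R] [PartialOrder R] [StarOrderedRing R] {p q r : R}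

theorem mul_le_left (hp : IsStarProjection p) (hq : IsStarProjection q) (hpq : Commute p q) :
    p * q ≤ p := by
  rw [(hp.mul hq hpq).le_iff_mul_eq_left hp, mul_assoc, ← hpq.eq, ← mul_assoc,
    hp.isIdempotentElem.eq]

theorem mul_le_right (hp : IsStarProjection p) (hq : IsStarProjection q) (hpq : Commute p q) :
    p * q ≤ q := by
  rw [(hp.mul hq hpq).le_iff_mul_eq_left hq, mul_assoc, hq.isIdempotentElem.eq]

theorem le_mul (hr : IsStarProjection r) (hp : IsStarProjection p) (hq : IsStarProjection q)
    (hpq : Commute p q) (hrp : r ≤ p) (hrq : r ≤ q) : r ≤ p * q := by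
  rw [hr.le_iff_mul_eq_left (hp.mul hq hpq), ← mul_assoc, (hr.le_iff_mul_eq_left hp).mp hrp,
    (hr.le_iff_mul_eq_left hq).mp hrq]

theorem le_add_sub_mul_left (hp : IsStarProjection p) (hq : IsStarProjection q)
    (hpq : Commute p q) : p ≤ p + q - p * q :=
  (hp.le_iff_mul_eq_left (add_sub_mul_of_commute hpq hp hq)).mpr
    (hp.isIdempotentElem.mul_add_sub_mul_left q)

theorem le_add_sub_mul_right (hp : IsStarProjection p) (hq : IsStarProjection q)
    (hpq : Commute p q) : q ≤ p + q - p * q :=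
  (hq.le_iff_mul_eq_left (add_sub_mul_of_commute hpq hp hq)).mpr
    (hq.isIdempotentElem.mul_add_sub_mul_right hpq)

theorem add_sub_mul_le (hp : IsStarProjection p) (hq : IsStarProjection q) (hpq : Commute p q)
    (hr : IsStarProjection r) (hpr : p ≤ r) (hqr : q ≤ r) : p + q - p * q ≤ r :=
  ((add_sub_mul_of_commute hpq hp hq).le_iff_mul_eq_left hr).mpr
    (add_sub_mul_mul_of_mul_eq ((hp.le_iff_mul_eq_left hr).mp hpr)
      ((hq.le_iff_mul_eq_left hr).mp hqr))

end IsStarProjection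

theorem isProj_iff {P : H →L[ℂ] H} : IsProj H P ↔ IsStarProjection P :=
  (isStarProjection_iff P).symm

theorem pleq_iff_le {P Q : H →L[ℂ] H} (hP : IsStarProjection P) (hQ : IsStarProjection Q) :
    pleq H P Q ↔ P ≤ Q :=
  (hP.le_iff_mul_eq_left hQ).symm

theorem IsStarProjection.le_iff_range_le {P Q : H →L[ℂ] H} (hP : IsStarProjection P)
    (hQ : IsStarProjection Q) : P ≤ Q ↔ P.range ≤ Q.range := by
  obtain ⟨K, _, rfl⟩ := isStarProjection_iff_eq_starProjection.mp hP
  obtain ⟨L, _, rfl⟩ := isStarProjection_iff_eq_starProjection.mp hQ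
  rw [Submodule.starProjection_le_starProjection_iff, Submodule.range_starProjection,
    Submodule.range_starProjection]

noncomputable def projSup (𝒮 : Set (H →L[ℂ] H)) : H →L[ℂ] H :=
  (⨆ P ∈ 𝒮, P.range).topologicalClosure.starProjection

theorem isStarProjection_projSup (𝒮 : Set (H →L[ℂ] H)) : IsStarProjection (projSup 𝒮) :=
  isStarProjection_starProjection

theorem range_projSup (𝒮 : Set (H →L[ℂ] H)) :
    (projSup 𝒮).range = (⨆ P ∈ 𝒮, P.range).topologicalClosure :=
  Submodule.range_starProjection _

theorem le_projSup {𝒮 : Set (H →L[ℂ] H)} {P : H →L[ℂ] H} (hP : IsStarProjection P)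
    (h : P ∈ 𝒮) : P ≤ projSup 𝒮 := by
  rw [hP.le_iff_range_le (isStarProjection_projSup 𝒮), range_projSup]
  exact (le_iSup₂_of_le P h le_rfl).trans
    (Submodule.le_topologicalClosure (⨆ P ∈ 𝒮, P.range))

theorem projSup_le {𝒮 : Set (H →L[ℂ] H)} (h𝒮 : ∀ P ∈ 𝒮, IsStarProjection P) {Q : H →L[ℂ] H}
    (hQ : IsStarProjection Q) (h : ∀ P ∈ 𝒮, P ≤ Q) : projSup 𝒮 ≤ Q := by
  rw [(isStarProjection_projSup 𝒮).le_iff_range_le hQ, range_projSup]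
  exact Submodule.topologicalClosure_minimal _
    (iSup₂_le fun P hP => ((h𝒮 P hP).le_iff_range_le hQ).mp (h P hP))
    (ContinuousLinearMap.IsIdempotentElem.isClosed_range hQ.isIdempotentElem)

theorem projSup_mem {𝒮 : Set (H →L[ℂ] H)} (h𝒮 : ∀ P ∈ 𝒮, IsStarProjection P)
    {A : VonNeumannAlgebra H} (hA : 𝒮 ⊆ A) : projSup 𝒮 ∈ A := by
  rw [VonNeumannAlgebra.IsStarProjection.mem_iff (isStarProjection_projSup 𝒮)]
  intro y hy
  rw [range_projSup]
  refine Submodule.topologicalClosure_mem_invtSubmodule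
    ((Module.End.mem_invtSubmodule _).mpr (iSup₂_le fun P hP => ?_))
  exact ((VonNeumannAlgebra.IsStarProjection.mem_iff (h𝒮 P hP) A).mp (hA hP) y hy).trans
    (Submodule.comap_mono (le_iSup₂_of_le P hP le_rfl))

theorem projSup_pair {P Q : H →L[ℂ] H} (hP : IsStarProjection P) (hQ : IsStarProjection Q)
    (hPQ : Commute P Q) : projSup {P, Q} = P + Q - P * Q := by
  have hJ := IsStarProjection.add_sub_mul_of_commute hPQ hP hQ
  refine le_antisymm (projSup_le (by simp [hP, hQ]) hJ ?_)
    (hP.add_sub_mul_le hQ hPQ (isStarProjection_projSup _) (le_projSup hP (by simp))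
      (le_projSup hQ (by simp)))
  simp only [Set.mem_insert_iff, Set.mem_singleton_iff, forall_eq_or_imp, forall_eq]
  exact ⟨hP.le_add_sub_mul_left hQ hPQ, hP.le_add_sub_mul_right hQ hPQ⟩

namespace LQM

theorem ext {S₁ S₂ : LQM H} (h : ∀ A, S₁.S A = S₂.S A) : S₁ = S₂ := by
  cases S₁; cases S₂; congr; exact funext h

theorem isStarProjection (S : LQM H) (A : AbAlg H) : IsStarProjection (S.S A) :=
  isProj_iff.mp (S.isProj A)

theorem commute (S₁ S₂ : LQM H) (A : AbAlg H) : Commute (S₁.S A) (S₂.S A) :=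
  A.2 _ (S₁.mem A) _ (S₂.mem A)

theorem le_iff_forall_le {S₁ S₂ : LQM H} : S₁ ≤ S₂ ↔ ∀ A, S₁.S A ≤ S₂.S A :=
  (le_def H S₁ S₂).trans <| forall_congr' fun A =>
    pleq_iff_le (S₁.isStarProjection A) (S₂.isStarProjection A)

theorem monotone (S : LQM H) {A B : AbAlg H} (h : A.1 ≤ B.1) : S.S A ≤ S.S B :=
  (pleq_iff_le (S.isStarProjection A) (S.isStarProjection B)).mp (S.mono A B h)

protected noncomputable def sSup (T : Set (LQM H)) : LQM H where
  S A := projSup ((fun S : LQM H => S.S A) '' T)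
  isProj A := isProj_iff.mpr (isStarProjection_projSup _)
  mem A := projSup_mem (by rintro _ ⟨S, -, rfl⟩; exact S.isStarProjection A)
    (by rintro _ ⟨S, -, rfl⟩; exact S.mem A)
  mono A B hAB := by
    rw [pleq_iff_le (isStarProjection_projSup _) (isStarProjection_projSup _)]
    refine projSup_le (by rintro _ ⟨S, -, rfl⟩; exact S.isStarProjection A)
      (isStarProjection_projSup _) ?_
    rintro _ ⟨S, hS, rfl⟩
    exact (S.monotone hAB).trans (le_projSup (S.isStarProjection B) ⟨S, hS, rfl⟩)

theorem isLUB_sSup (T : Set (LQM H)) : IsLUB T (LQM.sSup T) := by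
  refine ⟨fun S hS => le_iff_forall_le.mpr fun A =>
      le_projSup (S.isStarProjection A) ⟨S, hS, rfl⟩,
    fun U hU => le_iff_forall_le.mpr fun A => ?_⟩
  refine projSup_le (by rintro _ ⟨S, -, rfl⟩; exact S.isStarProjection A)
    (U.isStarProjection A) ?_
  rintro _ ⟨S, hS, rfl⟩
  exact le_iff_forall_le.mp (hU hS) A

theorem sSup_pair_apply (S₁ S₂ : LQM H) (A : AbAlg H) :
    (LQM.sSup {S₁, S₂}).S A = S₁.S A + S₂.S A - S₁.S A * S₂.S A := by
  rw [← projSup_pair (S₁.isStarProjection A) (S₂.isStarProjection A) (S₁.commute S₂ A)]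
  simp only [LQM.sSup, Set.image_pair]

theorem isProjSupIn_sSup_pair (S₁ S₂ : LQM H) (A : AbAlg H) :
    IsProjSupIn H A.1 (S₁.S A) (S₂.S A) ((LQM.sSup {S₁, S₂}).S A) := by
  have hP := S₁.isStarProjection A
  have hQ := S₂.isStarProjection A
  have hPQ := S₁.commute S₂ A
  have hJ := IsStarProjection.add_sub_mul_of_commute hPQ hP hQ
  have hmem := (LQM.sSup {S₁, S₂}).mem A
  rw [sSup_pair_apply] at hmem ⊢
  refine ⟨hmem, isProj_iff.mpr hJ, (pleq_iff_le hP hJ).mpr (hP.le_add_sub_mul_left hQ hPQ),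
    (pleq_iff_le hQ hJ).mpr (hP.le_add_sub_mul_right hQ hPQ), fun R _ hR hPR hQR => ?_⟩
  have hR := isProj_iff.mp hR
  exact (pleq_iff_le hJ hR).mpr (hP.add_sub_mul_le hQ hPQ hR ((pleq_iff_le hP hR).mp hPR)
    ((pleq_iff_le hQ hR).mp hQR))

noncomputable def inf (S₁ S₂ : LQM H) : LQM H where
  S A := S₁.S A * S₂.S A
  isProj A := isProj_iff.mpr <|
    (S₁.isStarProjection A).mul (S₂.isStarProjection A) (S₁.commute S₂ A)
  mem A := mul_mem (S₁.mem A) (S₂.mem A)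
  mono A B hAB := by
    have hP := S₁.isStarProjection A
    have hQ := S₂.isStarProjection A
    have hPQ := S₁.commute S₂ A
    rw [pleq_iff_le (hP.mul hQ hPQ)
      ((S₁.isStarProjection B).mul (S₂.isStarProjection B) (S₁.commute S₂ B))]
    exact (hP.mul hQ hPQ).le_mul (S₁.isStarProjection B) (S₂.isStarProjection B)
      (S₁.commute S₂ B)
      ((hP.mul_le_left hQ hPQ).trans (S₁.monotone hAB))
      ((hP.mul_le_right hQ hPQ).trans (S₂.monotone hAB))

theorem isGLB_inf (S₁ S₂ : LQM H) : IsGLB {S₁, S₂} (S₁.inf S₂) := by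
  refine ⟨?_, fun R hR => le_iff_forall_le.mpr fun A => ?_⟩
  · rintro S (rfl | rfl) <;> refine le_iff_forall_le.mpr fun A => ?_
    · exact (S.isStarProjection A).mul_le_left (S₂.isStarProjection A) (S.commute S₂ A)
    · exact (S₁.isStarProjection A).mul_le_right (S.isStarProjection A) (S₁.commute S A)
  · exact (R.isStarProjection A).le_mul (S₁.isStarProjection A) (S₂.isStarProjection A)
      (S₁.commute S₂ A) (le_iff_forall_le.mp (hR (by simp)) A)
      (le_iff_forall_le.mp (hR (by simp)) A)

theorem isProjInfIn_inf (S₁ S₂ : LQM H) (A : AbAlg H) :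
    IsProjInfIn H A.1 (S₁.S A) (S₂.S A) ((S₁.inf S₂).S A) := by
  have hP := S₁.isStarProjection A
  have hQ := S₂.isStarProjection A
  have hPQ := S₁.commute S₂ A
  have hM := hP.mul hQ hPQ
  refine ⟨(S₁.inf S₂).mem A, (S₁.inf S₂).isProj A,
    (pleq_iff_le hM hP).mpr (hP.mul_le_left hQ hPQ),
    (pleq_iff_le hM hQ).mpr (hP.mul_le_right hQ hPQ), fun R _ hR hRP hRQ => ?_⟩
  have hR := isProj_iff.mp hR
  exact (pleq_iff_le hR hM).mpr (hR.le_mul hP hQ hPQ ((pleq_iff_le hR hP).mp hRP)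
    ((pleq_iff_le hR hQ).mp hRQ))

theorem inf_sSup_pair (a b c : LQM H) : a.inf (LQM.sSup {b, c}) = LQM.sSup {a.inf b, a.inf c} :=
  ext fun A => by
    simp only [inf, sSup_pair_apply]
    exact (a.isStarProjection A).isIdempotentElem.mul_add_sub_mul_distrib (a.commute b A) _

end LQM

/-- `L_QM` with the pointwise order is a complete distributive lattice,
with binary meet and join computed pointwise (in each `L(𝒜)`). -/
theorem lqm_complete_distributive_lattice :
    (∀ T : Set (LQM H), ∃ j : LQM H, IsLUB T j) ∧
    (∀ T : Set (LQM H), ∃ m : LQM H, IsGLB T m) ∧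
    (∀ S₁ S₂ : LQM H, ∃ j : LQM H, IsLUB {S₁, S₂} j ∧
      ∀ A : AbAlg H, IsProjSupIn H A.1 (S₁.S A) (S₂.S A) (j.S A)) ∧
    (∀ S₁ S₂ : LQM H, ∃ m : LQM H, IsGLB {S₁, S₂} m ∧
      ∀ A : AbAlg H, IsProjInfIn H A.1 (S₁.S A) (S₂.S A) (m.S A)) ∧
    (∀ a b c bc abc ab ac u : LQM H, IsLUB {b, c} bc → IsGLB {a, bc} abc →
      IsGLB {a, b} ab → IsGLB {a, c} ac → IsLUB {ab, ac} u → abc = u) := by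
  refine ⟨fun T => ⟨_, LQM.isLUB_sSup T⟩,
    fun T => ⟨_, isLUB_lowerBounds.mp (LQM.isLUB_sSup (lowerBounds T))⟩,
    fun S₁ S₂ => ⟨_, LQM.isLUB_sSup _, S₁.isProjSupIn_sSup_pair S₂⟩,
    fun S₁ S₂ => ⟨_, S₁.isGLB_inf S₂, S₁.isProjInfIn_inf S₂⟩, ?_⟩
  intro a b c bc abc ab ac u hbc habc hab hac hu
  obtain rfl := hbc.unique (LQM.isLUB_sSup {b, c})
  obtain rfl := hab.unique (a.isGLB_inf b)
  obtain rfl := hac.unique (a.isGLB_inf c)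
  rw [habc.unique (a.isGLB_inf _), hu.unique (LQM.isLUB_sSup _)]
  exact a.inf_sSup_pair b c
end

section
/- The map i : S_QM → L_QM defined by i(𝒜, P)(𝒜') = P if 𝒜 ⊆ 𝒜' and i(𝒜, P)(𝒜') = 0 otherwise (and sending ⊥ to the bottom of L_QM), is an order embedding: i is injective on S_QM modulo the identification of (𝒜, 0) with ⊥, and (𝒜₁, P₁) ≤ (𝒜₂, P₂) in S_QM if and only if i(𝒜₁, P₁) ≤ i(𝒜₂, P₂) in L_QM. -/
open scoped ENNReal

variable (H : Type*) [NormedAddCommGroup H] [InnerProductSpace ℂ H] [CompleteSpace H]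

open Classical in
/-- The embedding `i : S_QM → L_QM`, `i(𝒜,P)(𝒜') = P` if `𝒜 ⊆ 𝒜'` and `0` otherwise. -/
noncomputable def iEmb (a : SQM H) : LQM H where
  S B := if a.alg ≤ B.1 then a.proj else 0
  isProj B := by
    show IsProj H (if a.alg ≤ B.1 then a.proj else 0)
    split_ifs
    · exact a.isProj
    · exact ⟨by simp [IsIdempotentElem], by simp [IsSelfAdjoint]⟩
  mem B := by
    show (if a.alg ≤ B.1 then a.proj else 0) ∈ B.1
    split_ifs with h
    · exact h a.mem
    · exact zero_mem B.1
  mono A B hAB := by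
    show (if a.alg ≤ A.1 then a.proj else 0) * (if a.alg ≤ B.1 then a.proj else 0)
        = (if a.alg ≤ A.1 then a.proj else 0)
    split_ifs with h1 h2
    · exact a.isProj.1
    · exact absurd (h1.trans hAB) h2
    · exact zero_mul _
    · exact zero_mul _

/-!
The value of `i(𝒜, P)` at `𝒜` itself is `P`, while `i(𝒜, P)` vanishes on algebras not containing
`𝒜`. Evaluating an inequality or an equality of images at the algebra of the left-hand pair
therefore recovers both the order of `S_QM` and the pair itself (once `P ≠ 0`).
-/

section

variable {H}

def SQM.toAbAlg (a : SQM H) : AbAlg H := ⟨a.alg, a.abelian⟩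

theorem iEmb_S_of_le {a : SQM H} {B : AbAlg H} (h : a.alg ≤ B.1) : (iEmb H a).S B = a.proj :=
  if_pos h

theorem iEmb_S_of_not_le {a : SQM H} {B : AbAlg H} (h : ¬ a.alg ≤ B.1) : (iEmb H a).S B = 0 :=
  if_neg h

theorem iEmb_S_toAbAlg (a : SQM H) : (iEmb H a).S a.toAbAlg = a.proj :=
  iEmb_S_of_le le_rfl

theorem iEmb_le_of_SQMle {a b : SQM H} (h : SQMle H a b) : iEmb H a ≤ iEmb H b := by
  intro B
  by_cases haB : a.alg ≤ B.1
  · rcases h with ha | ⟨hba, hab⟩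
    · rw [iEmb_S_of_le haB, ha]
      exact zero_mul _
    · rwa [iEmb_S_of_le haB, iEmb_S_of_le (hba.trans haB)]
  · rw [iEmb_S_of_not_le haB]
    exact zero_mul _

theorem SQMle_of_iEmb_le {a b : SQM H} (h : iEmb H a ≤ iEmb H b) : SQMle H a b := by
  have hA := h a.toAbAlg
  rw [iEmb_S_toAbAlg] at hA
  by_cases hba : b.alg ≤ a.alg
  · rw [iEmb_S_of_le hba] at hA
    exact Or.inr ⟨hba, hA⟩
  · rw [iEmb_S_of_not_le hba] at hA
    exact Or.inl (hA.symm.trans (mul_zero _))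

theorem SQMle_iff_iEmb_le (a b : SQM H) : SQMle H a b ↔ iEmb H a ≤ iEmb H b :=
  ⟨iEmb_le_of_SQMle, SQMle_of_iEmb_le⟩

theorem alg_le_and_proj_eq_of_iEmb_eq {a b : SQM H} (h : iEmb H a = iEmb H b)
    (ha : a.proj ≠ 0) : b.alg ≤ a.alg ∧ a.proj = b.proj := by
  have hA : a.proj = (iEmb H b).S a.toAbAlg := by rw [← h, iEmb_S_toAbAlg]
  by_cases hba : b.alg ≤ a.alg
  · exact ⟨hba, hA.trans (iEmb_S_of_le hba)⟩
  · exact absurd (hA.trans (iEmb_S_of_not_le hba)) ha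

end

/-- The map `i : S_QM → L_QM` is an order embedding: it is injective
modulo the identification of all `(𝒜,0)` with `⊥`, and `(𝒜₁,P₁) ≤ (𝒜₂,P₂)` in `S_QM`
iff `i(𝒜₁,P₁) ≤ i(𝒜₂,P₂)` in `L_QM`. -/
theorem iEmb_order_embedding :
    (∀ a b : SQM H, iEmb H a = iEmb H b →
      ((a.proj = 0 ∧ b.proj = 0) ∨ (a.alg = b.alg ∧ a.proj = b.proj))) ∧
    (∀ a b : SQM H, SQMle H a b ↔ iEmb H a ≤ iEmb H b) := by
  refine ⟨fun a b h => ?_, SQMle_iff_iEmb_le⟩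
  by_cases ha : a.proj = 0
  · by_cases hb : b.proj = 0
    · exact Or.inl ⟨ha, hb⟩
    · exact absurd ((alg_le_and_proj_eq_of_iEmb_eq h.symm hb).2.trans ha) hb
  · obtain ⟨hba, hab⟩ := alg_le_and_proj_eq_of_iEmb_eq h ha
    obtain ⟨hab', -⟩ := alg_le_and_proj_eq_of_iEmb_eq h.symm (hab ▸ ha)
    exact Or.inr ⟨le_antisymm hab' hba, hab⟩
end

section
/- Let ℋ be finite-dimensional and ρ a density operator on ℋ. Define, for F ∈ CL_QM and 𝒜 ∈ 𝔄, P_ρ(F | F_𝒜) := Σ_{P : (𝒜,P) ∈ F} Tr(ρP), the sum over the atoms P of L(𝒜) with (𝒜,P) ∈ F. Then for every fixed 𝒜 ∈ 𝔄 the map F ↦ P_ρ(F | F_𝒜) is a probability measure on (S!_QM, CL_QM): it takes values in [0,1], assigns 1 to F_𝒜 (and to S!_QM), and is countably additive on disjoint families. -/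
/-!
In finite dimension the atoms of an abelian algebra `𝒜` are finitely many pairwise orthogonal
projections summing to `1` (split projections by rank until they are atoms; two distinct atoms
multiply to a common subprojection, hence to `0`). So `P_ρ(· | F_𝒜)` is a finite sum of point
masses `Tr(ρP) = Tr(PρP) ≥ 0` at the points `(𝒜, P)`, all of which lie in `F_𝒜`, with total
mass `Tr(ρ · 1) = 1`; countable additivity of such a sum is pointwise additivity of indicators.
-/

open scoped ENNReal

variable (H : Type*) [NormedAddCommGroup H] [InnerProductSpace ℂ H] [CompleteSpace H]

/-- `P` is an atom of the Boolean lattice `L(𝒜)`, i.e. `P ∈ L₀(𝒜)`. -/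
def IsAtomIn (A : VonNeumannAlgebra H) (P : H →L[ℂ] H) : Prop :=
  P ∈ A ∧ IsProj H P ∧ P ≠ 0 ∧
    ∀ Q : H →L[ℂ] H, Q ∈ A → IsProj H Q → pleq H Q P → Q = 0 ∨ Q = P

/-- The set `S!_QM` of pairs `(𝒜, P)` with `𝒜 ∈ 𝔄` and `P ∈ L₀(𝒜)` an atom of `L(𝒜)`. -/
def SBang := {x : AbAlg H × (H →L[ℂ] H) // IsAtomIn H x.1.1 x.2}
/-- The condition `F_𝒜 = {(𝒜',P') ∈ S!_QM : 𝒜' ⊇ 𝒜}` expressing that `𝒜` is measured. -/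
def Fcond (A : AbAlg H) : Set (SBang H) := {x | A.1 ≤ x.1.1.1}
/-- The Born weight `Tr(ρP)` (as a real number). -/
noncomputable def bornWeight (ρ P : H →L[ℂ] H) : ℝ :=
  (LinearMap.trace ℂ H ↑(ρ * P)).re

/-- A density operator: a positive operator of trace one. -/
def IsDensityOp (ρ : H →L[ℂ] H) : Prop :=
  ρ.IsPositive ∧ LinearMap.trace ℂ H ↑ρ = 1
/-- The conditional probability `P_ρ(F | F_𝒜) = Σ_{P : (𝒜,P) ∈ F} Tr(ρP)`. -/
noncomputable def Pr (ρ : H →L[ℂ] H) (F : Set (SBang H)) (A : AbAlg H) : ℝ :=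
  ∑' x : {x : SBang H // x ∈ F ∧ x.1.1 = A}, bornWeight H ρ x.1.1.2

section Order

variable {H}
omit [CompleteSpace H]

theorem pleq_trans {P Q R : H →L[ℂ] H} (hPQ : pleq H P Q) (hQR : pleq H Q R) : pleq H P R := by
  unfold pleq at *
  rw [← hPQ, mul_assoc, hQR]

theorem sub_pleq_self {Q R : H →L[ℂ] H} (hQ : IsIdempotentElem Q) (hRQ : pleq H R Q) :
    pleq H (Q - R) Q := by
  rw [pleq, sub_mul, hQ.eq, hRQ]

theorem eq_zero_of_pleq_of_pleq_sub {P Q R : H →L[ℂ] H} (hPR : pleq H P R)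
    (hPQR : pleq H P (Q - R)) (hRQ : pleq H R Q) : P = 0 := by
  have hPQ : P * Q = P := pleq_trans hPR hRQ
  rw [pleq, mul_sub, hPQ, hPR, sub_self] at hPQR
  exact hPQR.symm

end Order

section Projections

variable {H}

theorem mul_eq_of_pleq {P Q : H →L[ℂ] H} (hP : IsProj H P) (hQ : IsProj H Q)
    (h : pleq H P Q) : Q * P = P := by
  simpa only [star_mul, hP.2.star_eq, hQ.2.star_eq] using congrArg star h

theorem IsProj.sub_of_pleq {Q R : H →L[ℂ] H} (hQ : IsProj H Q) (hR : IsProj H R)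
    (hRQ : pleq H R Q) : IsProj H (Q - R) := by
  have hQR : Q * R = R := mul_eq_of_pleq hR hQ hRQ
  refine ⟨?_, hQ.2.sub hR.2⟩
  have : (Q - R) * (Q - R) = Q * Q - Q * R - (R * Q - R * R) := by noncomm_ring
  rw [IsIdempotentElem, this, hQ.1.eq, hQR, hRQ, hR.1.eq, sub_self, sub_zero]

theorem IsProj.toLinearMap_isIdempotentElem {P : H →L[ℂ] H} (hP : IsProj H P) :
    IsIdempotentElem (P : H →ₗ[ℂ] H) :=
  congrArg ContinuousLinearMap.toLinearMap hP.1.eq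

end Projections

-- The rank of an idempotent is its trace, which is additive.
theorem finrank_range_add_finrank_range {K E : Type*} [Field K] [CharZero K]
    [AddCommGroup E] [Module K E] [FiniteDimensional K E] {f g : E →ₗ[K] E}
    (hf : IsIdempotentElem f) (hg : IsIdempotentElem g) (hfg : IsIdempotentElem (f + g)) :
    Module.finrank K (LinearMap.range f) + Module.finrank K (LinearMap.range g) =
      Module.finrank K (LinearMap.range (f + g)) := by
  have htrace := map_add (LinearMap.trace K E) f g
  rw [((LinearMap.isProj_range_iff_isIdempotentElem _).2 hf).trace,
    ((LinearMap.isProj_range_iff_isIdempotentElem _).2 hg).trace,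
    ((LinearMap.isProj_range_iff_isIdempotentElem _).2 hfg).trace] at htrace
  exact_mod_cast htrace.symm

theorem finrank_range_pos_of_ne_zero {K E : Type*} [Field K] [AddCommGroup E] [Module K E]
    [FiniteDimensional K E] {f : E →ₗ[K] E} (hf : f ≠ 0) :
    0 < Module.finrank K (LinearMap.range f) :=
  Module.finrank_pos_iff.2 <| Submodule.nontrivial_iff_ne_bot.2 <| LinearMap.range_eq_bot.not.2 hf

section Atoms

variable {H}

theorem IsAtomIn.mul_eq_zero {A : VonNeumannAlgebra H} (hA : IsAbelianAlg H A)
    {P Q : H →L[ℂ] H} (hP : IsAtomIn H A P) (hQ : IsAtomIn H A Q) (hne : P ≠ Q) :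
    P * Q = 0 := by
  have hcomm : P * Q = Q * P := hA P hP.1 Q hQ.1
  have hproj : IsProj H (P * Q) := by
    refine ⟨?_, ?_⟩
    · exact IsIdempotentElem.mul_of_commute hcomm hP.2.1.1 hQ.2.1.1
    · rw [IsSelfAdjoint, star_mul, hP.2.1.2.star_eq, hQ.2.1.2.star_eq, hcomm]
  have hleQ : pleq H (P * Q) Q := by rw [pleq, mul_assoc, hQ.2.1.1.eq]
  have hleP : pleq H (P * Q) P := by rw [pleq, hcomm, mul_assoc, hP.2.1.1.eq]
  have hmem : P * Q ∈ A := mul_mem hP.1 hQ.1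
  rcases hQ.2.2.2 _ hmem hproj hleQ with h | hPQ
  · exact h
  rcases hP.2.2.2 _ hmem hproj hleP with h | hQP
  · exact h
  exact absurd (hQP.symm.trans hPQ) hne

theorem exists_proper_subproj_of_not_isAtomIn {A : VonNeumannAlgebra H} {Q : H →L[ℂ] H}
    (hQA : Q ∈ A) (hQ : IsProj H Q) (hQ0 : Q ≠ 0) (hQa : ¬IsAtomIn H A Q) :
    ∃ R ∈ A, IsProj H R ∧ pleq H R Q ∧ R ≠ 0 ∧ R ≠ Q := by
  by_contra! h
  exact hQa ⟨hQA, hQ, hQ0, fun R hRA hR hRQ => or_iff_not_imp_left.2 (h R hRA hR hRQ)⟩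

-- Split off a proper subprojection and induct on the rank.
theorem exists_finset_isAtomIn_sum_eq [FiniteDimensional ℂ H] (A : VonNeumannAlgebra H)
    {Q : H →L[ℂ] H} (hQA : Q ∈ A) (hQ : IsProj H Q) :
    ∃ s : Finset (H →L[ℂ] H), (∀ P ∈ s, IsAtomIn H A P ∧ pleq H P Q) ∧ ∑ P ∈ s, P = Q := by
  classical
  induction hn : Module.finrank ℂ (LinearMap.range (Q : H →ₗ[ℂ] H))
    using Nat.strong_induction_on generalizing Q with
  | _ n ih =>
  by_cases hQ0 : Q = 0
  · exact ⟨∅, by simp, by simp [hQ0]⟩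
  by_cases hQa : IsAtomIn H A Q
  · exact ⟨{Q}, by simpa using ⟨hQa, hQ.1.eq⟩, Finset.sum_singleton _ _⟩
  obtain ⟨R, hRA, hR, hRQ, hR0, hRQ'⟩ := exists_proper_subproj_of_not_isAtomIn hQA hQ hQ0 hQa
  have hQR : IsProj H (Q - R) := hQ.sub_of_pleq hR hRQ
  have hsum : (R : H →ₗ[ℂ] H) + ↑(Q - R) = Q := by
    rw [← ContinuousLinearMap.toLinearMap_add, add_sub_cancel]
  have hrank := finrank_range_add_finrank_range hR.toLinearMap_isIdempotentElem
    hQR.toLinearMap_isIdempotentElem (hsum ▸ hQ.toLinearMap_isIdempotentElem)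
  rw [hsum, hn] at hrank
  have hpos : ∀ T : H →L[ℂ] H, T ≠ 0 → 0 < Module.finrank ℂ (LinearMap.range (T : H →ₗ[ℂ] H)) :=
    fun T hT => finrank_range_pos_of_ne_zero (ContinuousLinearMap.coe_injective.ne hT)
  obtain ⟨s₁, hs₁, hsum₁⟩ := ih _ (by have := hpos _ (sub_ne_zero.2 hRQ'.symm); omega)
    hRA hR rfl
  obtain ⟨s₂, hs₂, hsum₂⟩ := ih _ (by have := hpos _ hR0; omega) (sub_mem hQA hRA) hQR rfl
  have hdisj : Disjoint s₁ s₂ := Finset.disjoint_left.2 fun P h₁ h₂ =>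
    (hs₁ P h₁).1.2.2.1 (eq_zero_of_pleq_of_pleq_sub (hs₁ P h₁).2 (hs₂ P h₂).2 hRQ)
  refine ⟨s₁ ∪ s₂, fun P hP => ?_, by rw [Finset.sum_union hdisj, hsum₁, hsum₂, add_sub_cancel]⟩
  rcases Finset.mem_union.1 hP with h | h
  · exact ⟨(hs₁ P h).1, pleq_trans (hs₁ P h).2 hRQ⟩
  · exact ⟨(hs₂ P h).1, pleq_trans (hs₂ P h).2 (sub_pleq_self hQ.1 hRQ)⟩

-- The atoms below `1` exhaust all atoms, since a further atom would be orthogonal to their sum `1`.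
theorem exists_finset_atoms_sum_eq_one [FiniteDimensional ℂ H] {A : VonNeumannAlgebra H}
    (hA : IsAbelianAlg H A) :
    ∃ s : Finset (H →L[ℂ] H), (∀ P, P ∈ s ↔ IsAtomIn H A P) ∧ ∑ P ∈ s, P = 1 := by
  obtain ⟨s, hs, hsum⟩ := exists_finset_isAtomIn_sum_eq A (one_mem A)
    ⟨IsIdempotentElem.one, IsSelfAdjoint.one _⟩
  refine ⟨s, fun P => ⟨fun h => (hs P h).1, fun hP => ?_⟩, hsum⟩
  by_contra hPs
  refine hP.2.2.1 ?_
  rw [← mul_one P, ← hsum, Finset.mul_sum]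
  exact Finset.sum_eq_zero fun Q hQ => hP.mul_eq_zero hA (hs Q hQ).1 (by rintro rfl; exact hPs hQ)

end Atoms

section Born

variable {H}

theorem bornWeight_nonneg {ρ P : H →L[ℂ] H} (hρ : ρ.IsPositive) (hP : IsProj H P) :
    0 ≤ bornWeight H ρ P := by
  have hconj : (P * (ρ * P)).IsPositive := by
    have := hρ.adjoint_conj P
    rwa [hP.2.adjoint_eq] at this
  have htrace : LinearMap.trace ℂ H ↑(ρ * P) = LinearMap.trace ℂ H ↑(P * (ρ * P)) := by
    conv_lhs => rw [← hP.1.eq, ← mul_assoc]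
    exact LinearMap.trace_mul_comm ℂ (ρ * P : H →L[ℂ] H) (P : H →ₗ[ℂ] H)
  rw [bornWeight, htrace]
  exact (Complex.le_def.1 hconj.toLinearMap.trace_nonneg).1

omit [CompleteSpace H] in
theorem sum_bornWeight_eq_one {ρ : H →L[ℂ] H} (hρ : IsDensityOp H ρ)
    {s : Finset (H →L[ℂ] H)} (hs : ∑ P ∈ s, P = 1) : ∑ P ∈ s, bornWeight H ρ P = 1 := by
  have htrace : ∑ P ∈ s, bornWeight H ρ P = (LinearMap.trace ℂ H ↑(ρ * ∑ P ∈ s, P)).re := by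
    simp only [bornWeight, Finset.mul_sum, ContinuousLinearMap.toLinearMap_sum, map_sum,
      Complex.re_sum]
  rw [htrace, hs, mul_one, hρ.2, Complex.one_re]

end Born

section PointMasses

variable {X M : Type*} [AddCommMonoid M] [TopologicalSpace M] (w : X → M)

theorem tsum_subtype_inter_eq_sum_indicator (F : Set X) {T : Set X} (hT : T.Finite) :
    ∑' x : ↥(F ∩ T), w x = ∑ x ∈ hT.toFinset, F.indicator w x := by
  rw [tsum_subtype, tsum_eq_sum fun x hx => Set.indicator_of_notMem
    (fun h => hx (hT.mem_toFinset.2 h.2)) w]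
  refine Finset.sum_congr rfl fun x hx => ?_
  rw [Set.inter_comm, ← Set.indicator_indicator, Set.indicator_of_mem (hT.mem_toFinset.1 hx)]

theorem hasSum_indicator_iUnion {ι : Type*} {f : ι → Set X}
    (hf : Pairwise fun i j => Disjoint (f i) (f j)) (x : X) :
    HasSum (fun i => (f i).indicator w x) ((⋃ i, f i).indicator w x) := by
  by_cases hx : x ∈ ⋃ i, f i
  · obtain ⟨i, hi⟩ := Set.mem_iUnion.1 hx
    rw [Set.indicator_of_mem hx, ← Set.indicator_of_mem hi w]
    exact hasSum_single i fun j hj =>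
      Set.indicator_of_notMem (Set.disjoint_left.1 (hf hj.symm) hi) w
  · rw [Set.indicator_of_notMem hx]
    exact hasSum_zero.congr_fun fun i =>
      Set.indicator_of_notMem (fun h => hx (Set.mem_iUnion.2 ⟨i, h⟩)) w

end PointMasses

section Conditional

variable {H}

def atomsOver (A : AbAlg H) : Set (SBang H) := {x | x.1.1 = A}

theorem atomsOver_injOn (A : AbAlg H) : Set.InjOn (fun x : SBang H => x.1.2) (atomsOver A) :=
  fun _ hx _ hy h => Subtype.ext (Prod.ext (hx.trans hy.symm) h)

theorem atomsOver_finite [FiniteDimensional ℂ H] (A : AbAlg H) : (atomsOver A).Finite := by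
  obtain ⟨s, hs, -⟩ := exists_finset_atoms_sum_eq_one A.2
  refine .of_finite_image (s.finite_toSet.subset ?_) (atomsOver_injOn A)
  rintro _ ⟨x, rfl, rfl⟩
  exact (hs _).2 x.2

theorem sum_atomsOver_bornWeight [FiniteDimensional ℂ H] {ρ : H →L[ℂ] H}
    (hρ : IsDensityOp H ρ) (A : AbAlg H) :
    ∑ x ∈ (atomsOver_finite A).toFinset, bornWeight H ρ x.1.2 = 1 := by
  obtain ⟨s, hs, hsum⟩ := exists_finset_atoms_sum_eq_one A.2
  rw [← sum_bornWeight_eq_one hρ hsum]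
  refine Finset.sum_nbij (fun x => x.1.2) ?_ ?_ ?_ fun _ _ => rfl
  · intro x hx
    have hxA : x.1.1 = A := (atomsOver_finite A).mem_toFinset.1 hx
    exact (hs _).2 (hxA ▸ x.2)
  · simpa using atomsOver_injOn A
  · intro P hP
    exact ⟨⟨⟨A, P⟩, (hs P).1 hP⟩, (atomsOver_finite A).mem_toFinset.2 rfl, rfl⟩

theorem Pr_eq_sum_indicator [FiniteDimensional ℂ H] (ρ : H →L[ℂ] H) (F : Set (SBang H))
    (A : AbAlg H) :
    Pr H ρ F A = ∑ x ∈ (atomsOver_finite A).toFinset,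
      F.indicator (fun x : SBang H => bornWeight H ρ x.1.2) x :=
  tsum_subtype_inter_eq_sum_indicator (fun x : SBang H => bornWeight H ρ x.1.2) F
    (atomsOver_finite A)

end Conditional

/-- (`ℋ` finite-dimensional, `ρ` a density operator.) For each fixed
`𝒜 ∈ 𝔄`, the map `F ↦ P_ρ(F | F_𝒜) = Σ_{P : (𝒜,P) ∈ F} Tr(ρP)` is a probability measure
on `(S!_QM, CL_QM)`: it takes values in `[0,1]`, assigns `1` to `F_𝒜` and to `S!_QM`,
and is countably additive on disjoint families. -/
theorem pr_probability_measure [FiniteDimensional ℂ H] (ρ : H →L[ℂ] H)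
    (hρ : IsDensityOp H ρ) (A : AbAlg H) :
    (∀ F : Set (SBang H), 0 ≤ Pr H ρ F A ∧ Pr H ρ F A ≤ 1) ∧
    Pr H ρ (Fcond H A) A = 1 ∧
    Pr H ρ Set.univ A = 1 ∧
    (∀ f : ℕ → Set (SBang H), Pairwise (fun i j => Disjoint (f i) (f j)) →
      Pr H ρ (⋃ i, f i) A = ∑' i, Pr H ρ (f i) A) := by
  set t := (atomsOver_finite A).toFinset
  set w : SBang H → ℝ := fun x => bornWeight H ρ x.1.2
  have hw : ∀ x, 0 ≤ w x := fun x => bornWeight_nonneg hρ.1 x.2.2.1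
  have htotal : ∑ x ∈ t, w x = 1 := sum_atomsOver_bornWeight hρ A
  have hfull : ∀ F, ↑t ⊆ F → Pr H ρ F A = 1 := fun F hF => by
    rw [Pr_eq_sum_indicator, ← htotal]
    exact Finset.sum_congr rfl fun x hx => Set.indicator_of_mem (hF hx) w
  refine ⟨fun F => ⟨?_, ?_⟩, hfull _ ?_, hfull _ (Set.subset_univ _), fun f hf => ?_⟩
  · rw [Pr_eq_sum_indicator]
    exact Finset.sum_nonneg fun x _ => Set.indicator_nonneg (fun x _ => hw x) x
  · rw [Pr_eq_sum_indicator, ← htotal]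
    exact Finset.sum_le_sum fun x _ => Set.indicator_le_self' (fun x _ => hw x) x
  · intro x hx
    rw [Set.Finite.coe_toFinset] at hx
    exact le_of_eq (congrArg Subtype.val hx.symm)
  · simp only [Pr_eq_sum_indicator]
    exact (hasSum_sum fun x _ => hasSum_indicator_iUnion w hf x).tsum_eq.symm
end
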